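/- Let c and e be tripotents in a JB*-triple V. Then c ≤ e (i.e., e − c is a tripotent orthogonal to c) if and only if {c,e,c} + {c,c,e} = 2c. -/

import Mathlib

open scoped ComplexConjugate

class JBStarTriple (V : Type*) [NormedAddCommGroup V] [NormedSpace ℂ V] where
  tp : V → V → V → V
  box : V → V → V →L[ℂ] V
  box_apply : ∀ a b x : V, box a b x = tp a b x
  add_fst : ∀ a a' b c : V, tp (a + a') b c = tp a b c + tp a' b c
  smul_fst : ∀ (α : ℂ) (a b c : V), tp (α • a) b c = α • tp a b c
  symm_outer : ∀ a b c : V, tp a b c = tp c b a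
  add_snd : ∀ a b b' c : V, tp a (b + b') c = tp a b c + tp a b' c
  conj_snd : ∀ (α : ℂ) (a b c : V), tp a (α • b) c = conj α • tp a b c
  jordan_identity : ∀ a b x y z : V,
    tp a b (tp x y z) = tp (tp a b x) y z - tp x (tp b a y) z + tp x y (tp a b z)
  hermitian : ∀ (a : V) (t : ℝ), ‖NormedSpace.exp ((Complex.I * (t : ℂ)) • box a a)‖ = 1
  nonneg_spectrum : ∀ a : V, spectrum ℂ (box a a) ⊆ {z : ℂ | 0 ≤ z.re ∧ z.im = 0}
  norm_tp_le : ∀ a b c : V, ‖tp a b c‖ ≤ ‖a‖ * ‖b‖ * ‖c‖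
  norm_tp_self : ∀ a : V, ‖tp a a a‖ = ‖a‖ ^ 3

namespace JBStarTriple

variable {V : Type*} [NormedAddCommGroup V] [NormedSpace ℂ V] [JBStarTriple V]

def IsTripotent (e : V) : Prop := tp e e e = e

def Orthogonal (a b : V) : Prop := ∀ x : V, tp a b x = 0

def IsMinimalTripotent (e : V) : Prop :=
  IsTripotent e ∧ e ≠ 0 ∧ ∀ v : V, ∃ α : ℂ, tp e v e = α • e

def Peirce2 (e : V) : Set V := {x : V | tp e e x = x}

/-- `c ≤ e` for tripotents: `e - c` is a tripotent orthogonal to `c`. -/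
def TripLE (c e : V) : Prop := IsTripotent (e - c) ∧ Orthogonal (e - c) c

/-- The box operator as a `ℂ`-linear map. -/
def boxL (x y : V) : V →ₗ[ℂ] V where
  toFun v := tp x y v
  map_add' u v := by
    show tp x y (u + v) = tp x y u + tp x y v
    rw [symm_outer x y (u + v), add_fst, ← symm_outer x y u, ← symm_outer x y v]
  map_smul' α v := by
    show tp x y (α • v) = α • tp x y v
    rw [symm_outer x y (α • v), smul_fst, ← symm_outer x y v]

/-- The trace inner product `⟨x, y⟩ = Tr (x □ y)`. -/
noncomputable def trform (x y : V) : ℂ := LinearMap.trace ℂ V (boxL x y)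

end JBStarTriple

open JBStarTriple

/-! Write `u = e - c`. The identity `{c,u,c} + {c,c,u} = 0` says that `u` has no Peirce
1-component and that its Peirce 2-component `a = (c □ c) u` is skew: `Q(c) a = -a`. Since
`V₀(c)` is orthogonal to `V₂(c)`, tripotency of `e = (c + a) + u₀` splits into tripotency of
`c + a` and of `u₀`, and a skew `a ∈ V₂(c)` with `c + a` tripotent vanishes by a few instances
of the Jordan identity. Hence `e - c = u₀ ∈ V₀(c)`, which is orthogonal to `c`. -/

namespace JBStarTriple

variable {V : Type*} [NormedAddCommGroup V] [NormedSpace ℂ V] [JBStarTriple V]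

-- `⦃c, x, c⦄` is `Q(c) x` and `⦃c, c, x⦄` is `(c □ c) x`; lemma names call them `quad` and `box`.
local notation "⦃" x ", " y ", " z "⦄" => tp x y z

@[simp] lemma tp_add_left (a a' b z : V) : ⦃a + a', b, z⦄ = ⦃a, b, z⦄ + ⦃a', b, z⦄ :=
  add_fst a a' b z

@[simp] lemma tp_add_middle (a b b' z : V) : ⦃a, b + b', z⦄ = ⦃a, b, z⦄ + ⦃a, b', z⦄ :=
  add_snd a b b' z

@[simp] lemma tp_add_right (a b z z' : V) : ⦃a, b, z + z'⦄ = ⦃a, b, z⦄ + ⦃a, b, z'⦄ := by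
  rw [symm_outer, add_fst, symm_outer z, symm_outer z']

@[simp] lemma tp_smul_right (α : ℂ) (a b z : V) : ⦃a, b, α • z⦄ = α • ⦃a, b, z⦄ := by
  rw [symm_outer, smul_fst, symm_outer z]

@[simp] lemma tp_neg_left (a b z : V) : ⦃-a, b, z⦄ = -⦃a, b, z⦄ := by
  simpa using smul_fst (-1) a b z

@[simp] lemma tp_neg_middle (a b z : V) : ⦃a, -b, z⦄ = -⦃a, b, z⦄ := by
  simpa using conj_snd (-1) a b z

@[simp] lemma tp_neg_right (a b z : V) : ⦃a, b, -z⦄ = -⦃a, b, z⦄ := by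
  simpa using tp_smul_right (-1) a b z

@[simp] lemma tp_sub_left (a a' b z : V) : ⦃a - a', b, z⦄ = ⦃a, b, z⦄ - ⦃a', b, z⦄ := by
  simp [sub_eq_add_neg]

@[simp] lemma tp_sub_middle (a b b' z : V) : ⦃a, b - b', z⦄ = ⦃a, b, z⦄ - ⦃a, b', z⦄ := by
  simp [sub_eq_add_neg]

@[simp] lemma tp_sub_right (a b z z' : V) : ⦃a, b, z - z'⦄ = ⦃a, b, z⦄ - ⦃a, b, z'⦄ := by
  simp [sub_eq_add_neg]

@[simp] lemma tp_zero_left (b z : V) : ⦃0, b, z⦄ = 0 := by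
  simpa using smul_fst 0 0 b z

@[simp] lemma tp_zero_middle (a z : V) : ⦃a, 0, z⦄ = 0 := by
  simpa using conj_snd 0 a 0 z

@[simp] lemma tp_zero_right (a b : V) : ⦃a, b, 0⦄ = 0 := by
  rw [symm_outer, tp_zero_left]

lemma eq_zero_of_tp_self_eq_zero {w : V} (h : ⦃w, w, w⦄ = 0) : w = 0 := by
  have h3 := norm_tp_self w
  rw [h, norm_zero, eq_comm, pow_eq_zero_iff three_ne_zero] at h3
  exact norm_eq_zero.mp h3

lemma Orthogonal.symm {a b : V} (h : Orthogonal a b) : Orthogonal b a := fun y ↦ by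
  refine eq_zero_of_tp_self_eq_zero ?_
  have key : ∀ x z : V, ⦃x, ⦃b, a, y⦄, z⦄ = 0 := fun x z ↦ by
    have J := jordan_identity a b x y z
    rw [h, h, h, tp_zero_left, tp_zero_right] at J
    linear_combination (norm := module) J
  exact key _ _

lemma Orthogonal.quad_right {y c : V} (h : Orthogonal y c) (w : V) : Orthogonal y ⦃c, w, c⦄ :=
  fun z ↦ by
    have J := jordan_identity w c y c z
    rw [symm_outer w c y, h, h, h, tp_zero_left, tp_zero_right] at J
    linear_combination (norm := module) J

lemma Orthogonal.tp_add_self {a b : V} (h : Orthogonal a b) :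
    ⦃a + b, a + b, a + b⦄ = ⦃a, a, a⦄ + ⦃b, b, b⦄ := by
  have hab : ∀ x, ⦃a, b, x⦄ = 0 := h
  have hba : ∀ x, ⦃b, a, x⦄ = 0 := h.symm
  simp only [tp_add_left, tp_add_middle, tp_add_right]
  rw [symm_outer a a b, symm_outer b b a]
  simp only [hab, hba]
  abel

/-- The Peirce space `V_k(c)`: the eigenspace of `c □ c` for the eigenvalue `k / 2`. -/
noncomputable def peirceSpace (c : V) (k : ℤ) : Submodule ℂ V :=
  Module.End.eigenspace (boxL c c) ((k : ℂ) / 2)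

section Peirce

variable {c : V}

lemma mem_peirceSpace {x : V} {k : ℤ} : x ∈ peirceSpace c k ↔ ⦃c, c, x⦄ = ((k : ℂ) / 2) • x :=
  Module.End.mem_eigenspace_iff

lemma mem_peirceSpace_zero {x : V} : x ∈ peirceSpace c 0 ↔ ⦃c, c, x⦄ = 0 := by
  simp [mem_peirceSpace]

lemma mem_peirceSpace_two {x : V} : x ∈ peirceSpace c 2 ↔ ⦃c, c, x⦄ = x := by
  simp [mem_peirceSpace]

lemma tp_mem_peirceSpace {x y z : V} {i j k : ℤ} (hx : x ∈ peirceSpace c i)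
    (hy : y ∈ peirceSpace c j) (hz : z ∈ peirceSpace c k) :
    ⦃x, y, z⦄ ∈ peirceSpace c (i - j + k) := by
  rw [mem_peirceSpace] at *
  have J := jordan_identity c c x y z
  rw [hx, hy, hz, smul_fst, conj_snd, tp_smul_right, map_div₀, map_intCast, map_ofNat] at J
  push_cast
  linear_combination (norm := module) J

lemma IsTripotent.mem_peirceSpace_two_self (hc : IsTripotent c) : c ∈ peirceSpace c 2 :=
  mem_peirceSpace_two.2 hc

end Peirce

namespace IsTripotent

variable {c : V}

lemma box_quad (hc : IsTripotent c) (x : V) : ⦃c, c, ⦃c, x, c⦄⦄ = ⦃c, x, c⦄ := by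
  have J₁ := jordan_identity c c c x c
  have J₂ := jordan_identity c x c c c
  rw [hc] at J₁ J₂
  rw [symm_outer _ c c, symm_outer x c c] at J₂
  have h3 : (3 : ℂ) • ⦃c, c, ⦃c, x, c⦄⦄ = (3 : ℂ) • ⦃c, x, c⦄ := by
    linear_combination (norm := module) J₁ - J₂
  exact smul_right_injective V three_ne_zero h3

lemma quad_box (hc : IsTripotent c) (x : V) : ⦃c, ⦃c, c, x⦄, c⦄ = ⦃c, x, c⦄ := by
  have J := jordan_identity c c c x c
  rw [hc] at J
  linear_combination (norm := module) J - hc.box_quad x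

lemma quad_quad_add_box (hc : IsTripotent c) (x : V) :
    ⦃c, ⦃c, x, c⦄, c⦄ + ⦃c, c, x⦄ = (2 : ℂ) • ⦃c, c, ⦃c, c, x⦄⦄ := by
  have J := jordan_identity x c c c c
  rw [hc, symm_outer x c c, symm_outer _ c c] at J
  linear_combination (norm := module) J

/-- `D (2D - 1) (D - 1) = 0` for `D = c □ c`, so the eigenvalues of `D` lie in `{0, 1/2, 1}`. -/
lemma box_cubic (hc : IsTripotent c) (x : V) :
    (2 : ℂ) • ⦃c, c, ⦃c, c, ⦃c, c, x⦄⦄⦄ + ⦃c, c, x⦄ = (3 : ℂ) • ⦃c, c, ⦃c, c, x⦄⦄ := by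
  have h₁ := hc.quad_quad_add_box ⦃c, c, x⦄
  rw [hc.quad_box] at h₁
  linear_combination (norm := module) hc.quad_quad_add_box x - h₁

lemma quad_mem_peirceSpace_two (hc : IsTripotent c) (x : V) : ⦃c, x, c⦄ ∈ peirceSpace c 2 :=
  mem_peirceSpace_two.2 (hc.box_quad x)

lemma quad_quad_of_mem_peirceSpace_two (hc : IsTripotent c) {x : V} (hx : x ∈ peirceSpace c 2) :
    ⦃c, ⦃c, x, c⦄, c⦄ = x := by
  have h := hc.quad_quad_add_box x
  rw [mem_peirceSpace_two.1 hx, mem_peirceSpace_two.1 hx] at h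
  linear_combination (norm := module) h

lemma eq_zero_of_mem_peirceSpace (hc : IsTripotent c) {x : V} {k : ℤ}
    (hx : x ∈ peirceSpace c k) (h₀ : k ≠ 0) (h₁ : k ≠ 1) (h₂ : k ≠ 2) : x = 0 := by
  rw [mem_peirceSpace] at hx
  have hx₂ : ⦃c, c, ⦃c, c, x⦄⦄ = ((k : ℂ) / 2) ^ 2 • x := by
    rw [hx, tp_smul_right, hx, smul_smul, sq]
  have hx₃ : ⦃c, c, ⦃c, c, ⦃c, c, x⦄⦄⦄ = ((k : ℂ) / 2) ^ 3 • x := by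
    rw [hx₂, tp_smul_right, hx, smul_smul, ← pow_succ]
  have h := hc.box_cubic x
  rw [hx₃, hx₂, hx] at h
  have hk : (k * (k - 1) * (k - 2) : ℂ) • x = 0 := by
    linear_combination (norm := module) (4 : ℂ) • h
  refine (smul_eq_zero.1 hk).resolve_left ?_
  exact_mod_cast mul_ne_zero (mul_ne_zero h₀ (sub_ne_zero.2 h₁)) (sub_ne_zero.2 h₂)

lemma exists_peirce_decomposition (hc : IsTripotent c) (x : V) :
    ∃ x₀ ∈ peirceSpace c 0, ∃ x₁ ∈ peirceSpace c 1, ∃ x₂ ∈ peirceSpace c 2,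
      x = x₀ + x₁ + x₂ := by
  have h := hc.box_cubic x
  refine ⟨x - (3 : ℂ) • ⦃c, c, x⦄ + (2 : ℂ) • ⦃c, c, ⦃c, c, x⦄⦄, ?_,
    (4 : ℂ) • ⦃c, c, x⦄ - (4 : ℂ) • ⦃c, c, ⦃c, c, x⦄⦄, ?_,
    (2 : ℂ) • ⦃c, c, ⦃c, c, x⦄⦄ - ⦃c, c, x⦄, ?_, by module⟩ <;>
    simp only [mem_peirceSpace, tp_add_right, tp_sub_right, tp_smul_right] <;> push_cast
  · linear_combination (norm := module) h
  · linear_combination (norm := module) (-2 : ℂ) • h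
  · linear_combination (norm := module) h

lemma orthogonal_of_mem_peirceSpace_zero (hc : IsTripotent c) {y : V}
    (hy : y ∈ peirceSpace c 0) : Orthogonal y c := by
  have hc₂ := hc.mem_peirceSpace_two_self
  intro x
  obtain ⟨x₀, hx₀, x₁, hx₁, x₂, hx₂, rfl⟩ := hc.exists_peirce_decomposition x
  have h₀ : ⦃y, c, x₀⦄ = 0 := hc.eq_zero_of_mem_peirceSpace (tp_mem_peirceSpace hy hc₂ hx₀)
    (by norm_num) (by norm_num) (by norm_num)
  have h₁ : ⦃y, c, x₁⦄ = 0 := hc.eq_zero_of_mem_peirceSpace (tp_mem_peirceSpace hy hc₂ hx₁)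
    (by norm_num) (by norm_num) (by norm_num)
  -- `x₂ = Q(c) w` with `w = Q(c) x₂ ∈ V₂(c)`, and `⦃c, y, w⦄ ∈ V₄(c) = 0`.
  have h₂ : ⦃y, c, x₂⦄ = 0 := by
    have hw := hc.quad_mem_peirceSpace_two x₂
    have hyw : ⦃c, y, ⦃c, x₂, c⦄⦄ = 0 := hc.eq_zero_of_mem_peirceSpace
      (tp_mem_peirceSpace hc₂ hy hw) (by norm_num) (by norm_num) (by norm_num)
    have J := jordan_identity y c c ⦃c, x₂, c⦄ c
    rw [symm_outer y c c, mem_peirceSpace_zero.1 hy, hyw,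
      hc.quad_quad_of_mem_peirceSpace_two hx₂, tp_zero_left, tp_zero_middle, tp_zero_right] at J
    simpa using J
  simp [h₀, h₁, h₂]

lemma orthogonal_peirceSpace_zero_two (hc : IsTripotent c) {y x : V}
    (hy : y ∈ peirceSpace c 0) (hx : x ∈ peirceSpace c 2) : Orthogonal y x := by
  rw [← hc.quad_quad_of_mem_peirceSpace_two hx]
  exact (hc.orthogonal_of_mem_peirceSpace_zero hy).quad_right _

lemma isTripotent_of_add_mem_peirceSpace (hc : IsTripotent c) {x y : V}
    (hx : x ∈ peirceSpace c 2) (hy : y ∈ peirceSpace c 0) (hxy : IsTripotent (x + y)) :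
    IsTripotent x ∧ IsTripotent y := by
  have hsplit := (hc.orthogonal_peirceSpace_zero_two hy hx).symm.tp_add_self
  rw [hxy] at hsplit
  have hx₃ : ⦃x, x, x⦄ ∈ peirceSpace c 2 := by simpa using tp_mem_peirceSpace hx hx hx
  have hy₃ : ⦃y, y, y⦄ ∈ peirceSpace c 0 := by simpa using tp_mem_peirceSpace hy hy hy
  have hw₂ : ⦃x, x, x⦄ - x ∈ peirceSpace c 2 := sub_mem hx₃ hx
  have hw₀ : ⦃x, x, x⦄ - x ∈ peirceSpace c 0 := by
    rw [show ⦃x, x, x⦄ - x = y - ⦃y, y, y⦄ by linear_combination (norm := module) -hsplit]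
    exact sub_mem hy hy₃
  have hw : ⦃x, x, x⦄ - x = 0 := by
    rw [← mem_peirceSpace_two.1 hw₂, mem_peirceSpace_zero.1 hw₀]
  refine ⟨sub_eq_zero.1 hw, ?_⟩
  change ⦃y, y, y⦄ = y
  linear_combination (norm := module) -hsplit - hw

section Skew

variable {a : V}

lemma tp_skew_skew_self (hc : IsTripotent c) (ha : a ∈ peirceSpace c 2)
    (hQa : ⦃c, a, c⦄ = -a) : ⦃a, a, c⦄ = -⦃a, c, a⦄ := by
  have hs : ⦃c, c, ⦃a, c, a⦄⦄ = ⦃a, c, a⦄ :=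
    mem_peirceSpace_two.1 (by simpa using tp_mem_peirceSpace ha hc.mem_peirceSpace_two_self ha)
  have J := jordan_identity a c a c c
  rw [symm_outer a c c, mem_peirceSpace_two.1 ha, symm_outer _ c c, hs, hQa, tp_neg_middle] at J
  linear_combination (norm := module) -J

lemma eq_zero_of_isTripotent_add_skew (hc : IsTripotent c) (ha : a ∈ peirceSpace c 2)
    (hQa : ⦃c, a, c⦄ = -a) (hca : IsTripotent (c + a)) : a = 0 := by
  have haac := hc.tp_skew_skew_self ha hQa
  set s := ⦃a, c, a⦄
  have hacc : ⦃a, c, c⦄ = a := by rw [symm_outer, mem_peirceSpace_two.1 ha]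
  have haaa : ⦃a, a, a⦄ = s := by
    simp only [IsTripotent, tp_add_left, tp_add_middle, tp_add_right] at hca
    rw [hc, mem_peirceSpace_two.1 ha, hQa, hacc, symm_outer c a a, haac] at hca
    linear_combination (norm := module) hca
  have hsca : ⦃s, c, a⦄ = -s := by
    have J := jordan_identity a c a c a
    rw [hQa, tp_neg_middle, haaa] at J
    linear_combination (norm := module) -J
  have hQs : ⦃c, s, c⦄ = s := by
    have J := jordan_identity c a c a c
    rw [hQa, tp_neg_left, tp_neg_right] at J
    linear_combination (norm := module) J - haac
  have haas : ⦃a, a, s⦄ = -⦃s, c, s⦄ := by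
    have J := jordan_identity a c a c s
    rw [hQa, tp_neg_middle] at J
    linear_combination (norm := module) -J
  have hasa : ⦃a, s, a⦄ = (2 : ℂ) • s - ⦃s, c, s⦄ := by
    have J := jordan_identity s c a c a
    rw [hsca, tp_neg_left, tp_neg_right, hQs, symm_outer a c s, hsca] at J
    linear_combination (norm := module) J
  have hs0 : s = 0 := by
    have J := jordan_identity a a a a a
    rw [haaa, symm_outer s a a, haas, hasa] at J
    have h2 : (2 : ℂ) • s = 0 := by linear_combination (norm := module) J
    exact (smul_eq_zero.1 h2).resolve_left two_ne_zero
  exact eq_zero_of_tp_self_eq_zero (haaa.trans hs0)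

end Skew

lemma tripLE_of_quad_add_box (hc : IsTripotent c) {e : V} (he : IsTripotent e)
    (h : ⦃c, e, c⦄ + ⦃c, c, e⦄ = (2 : ℂ) • c) : TripLE c e := by
  have hu : ⦃c, e - c, c⦄ + ⦃c, c, e - c⦄ = 0 := by
    rw [tp_sub_middle, tp_sub_right, hc]
    linear_combination (norm := module) h
  set a := ⦃c, c, e - c⦄
  have hQa : ⦃c, a, c⦄ = -a := by
    rw [hc.quad_box]
    linear_combination (norm := module) hu
  have hDa : ⦃c, c, a⦄ = a := by
    have hDu := congrArg (⦃c, c, ·⦄) hu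
    simp only [tp_add_right, hc.box_quad, tp_zero_right] at hDu
    linear_combination (norm := module) hDu - hu
  have ha : a ∈ peirceSpace c 2 := mem_peirceSpace_two.2 hDa
  have hu₀ : e - c - a ∈ peirceSpace c 0 :=
    mem_peirceSpace_zero.2 (by rw [tp_sub_right, hDa, sub_self])
  obtain ⟨hca, hu₀₃⟩ := hc.isTripotent_of_add_mem_peirceSpace
    (add_mem hc.mem_peirceSpace_two_self ha) hu₀ (by rwa [add_add_sub_cancel, add_sub_cancel])
  rw [hc.eq_zero_of_isTripotent_add_skew ha hQa hca, sub_zero] at hu₀ hu₀₃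
  exact ⟨hu₀₃, hc.orthogonal_of_mem_peirceSpace_zero hu₀⟩

end IsTripotent

lemma TripLE.quad_add_box {c e : V} (hc : IsTripotent c) (h : TripLE c e) :
    ⦃c, e, c⦄ + ⦃c, c, e⦄ = (2 : ℂ) • c := by
  have hQ : ⦃c, e, c⦄ = c := by
    have h₁ := h.2.symm c
    rw [tp_sub_middle, hc] at h₁
    exact sub_eq_zero.1 h₁
  have hD : ⦃c, c, e⦄ = c := by
    have h₂ := h.2 c
    rw [tp_sub_left, symm_outer e, hc] at h₂
    exact sub_eq_zero.1 h₂
  rw [hQ, hD, two_smul]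

end JBStarTriple

theorem stmt10 {V : Type*} [NormedAddCommGroup V] [NormedSpace ℂ V] [JBStarTriple V]
    (c e : V) (hc : IsTripotent c) (he : IsTripotent e) :
    TripLE c e ↔ tp c e c + tp c c e = (2 : ℂ) • c :=
  ⟨TripLE.quad_add_box hc, hc.tripLE_of_quad_add_box he⟩
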